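/- For every x > 0, every τ ∈ ℝ and every integer N ≥ 0, ∫₀^x (x² − y²)^{N−iτ} · I_{N+1}(y) · y^{−N} dy = ( 2^{−N−2} · x^{2N−2iτ+2} / ((N − iτ + 1)·(N+1)!) ) · ₁F₂(1; N−iτ+2, N+2; x²/4). -/

import Mathlib

open MeasureTheory

/-- Modified Bessel function of the first kind of integer order:
`I_m(t) = Σ_{k≥0} (t/2)^{2k+m} / (k! (k+m)!)`. -/
noncomputable def besselI (m : ℕ) (t : ℝ) : ℝ :=
  ∑' k : ℕ, (t / 2) ^ (2 * k + m) / ((Nat.factorial k : ℝ) * (Nat.factorial (k + m) : ℝ))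

/-- Complex Pochhammer symbol `(a)_m = a (a+1) ⋯ (a+m−1)`. -/
noncomputable def pochC (a : ℂ) (m : ℕ) : ℂ := ∏ j ∈ Finset.range m, (a + j)

/-- Hypergeometric series `₁F₂(a; b, c; z) = Σ_{k≥0} (a)_k z^k / ((b)_k (c)_k k!)`. -/
noncomputable def oneF2 (a b c z : ℂ) : ℂ :=
  ∑' k : ℕ, pochC a k * z ^ k / (pochC b k * pochC c k * (Nat.factorial k : ℂ))

open Complex


lemma pochC_zero (a : ℂ) : pochC a 0 = 1 := by simp [pochC]

lemma pochC_succ (a : ℂ) (m : ℕ) : pochC a (m+1) = pochC a m * (a + m) := by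
  simp [pochC, Finset.prod_range_succ]

lemma pochC_succ' (a : ℂ) (m : ℕ) : pochC a (m+1) = a * pochC (a+1) m := by
  rw [pochC, Finset.prod_range_succ', mul_comm]
  congr 1
  · norm_num
  · refine Finset.prod_congr rfl fun i _ => ?_
    push_cast; ring

lemma pochC_ne_zero {a : ℂ} (ha : 0 < a.re) (m : ℕ) : pochC a m ≠ 0 := by
  refine Finset.prod_ne_zero_iff.2 fun j _ => ?_
  refine fun h => absurd (congrArg Complex.re h) (ne_of_gt ?_)
  simp only [Complex.add_re, Complex.natCast_re, Complex.zero_re]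
  positivity

lemma pochC_one (k : ℕ) : pochC 1 k = (Nat.factorial k : ℂ) := by
  induction k with
  | zero => simp [pochC]
  | succ n ih => rw [pochC_succ, ih]; push_cast [Nat.factorial_succ]; ring

lemma fact_mul_pochC (N k : ℕ) : (Nat.factorial (N+1) : ℂ) * pochC ((N:ℂ)+2) k
    = (Nat.factorial (k + N + 1) : ℂ) := by
  induction k with
  | zero => simp [pochC]
  | succ n ih =>
      rw [pochC_succ, ← mul_assoc, ih]
      have : n + 1 + N + 1 = (n + N + 1) + 1 := by omega
      have hcast : ((n+N+1+1 : ℕ) : ℂ) = (N:ℂ) + 2 + (n:ℂ) := by push_cast; ring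
      rw [this]
      conv_rhs => rw [Nat.factorial_succ, Nat.cast_mul, hcast]
      ring

lemma cpow_sq {x : ℝ} (hx : 0 < x) (w : ℂ) : ((x:ℂ)^2) ^ w = (x:ℂ) ^ (2*w) := by
  have h : ((x:ℂ)^2) = (x:ℂ) ^ (2:ℂ) := by
    rw [show ((2:ℂ)) = ((2:ℕ):ℂ) by norm_num, Complex.cpow_natCast]
  rw [h, ← Complex.cpow_mul]
  · have : (Complex.log x * 2).im = 0 := by
      simp [Complex.mul_im, Complex.log_im, Complex.arg_ofReal_of_nonneg hx.le]
    · rw [this]; exact neg_neg_iff_pos.mpr Real.pi_pos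
  · have : (Complex.log x * 2).im = 0 := by
      simp [Complex.mul_im, Complex.log_im, Complex.arg_ofReal_of_nonneg hx.le]
    rw [this]; exact Real.pi_pos.le

lemma ofReal_base (x y : ℝ) : ((x:ℂ)^2 - (y:ℂ)^2) = ((x^2 - y^2 : ℝ) : ℂ) := by push_cast; ring

lemma integrableOn_cpow_mul_pow {x : ℝ} (hx : 0 < x) {s : ℂ} (hs : 0 ≤ s.re) (n : ℕ) :
    IntegrableOn (fun y : ℝ => ((x:ℂ)^2 - (y:ℂ)^2) ^ s * (y:ℂ)^n) (Set.Ioo 0 x) := by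
  have hcont : ContinuousOn (fun y : ℝ => ((x:ℂ)^2 - (y:ℂ)^2) ^ s * (y:ℂ)^n) (Set.Ioo 0 x) := by
    intro y hy
    apply ContinuousWithinAt.mul _ (Continuous.continuousWithinAt (by continuity))
    simp only [ofReal_base]
    have hpos : (0:ℝ) < x^2 - y^2 := by nlinarith [hy.1, hy.2]
    have h1 : ContinuousAt (fun t : ℝ => (t:ℂ) ^ s) (x^2 - y^2) :=
      Complex.continuousAt_ofReal_cpow_const _ _ (Or.inr hpos.ne')
    have h2c : ContinuousAt (fun y : ℝ => x^2 - y^2) y := by fun_prop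
    exact (ContinuousAt.comp (g := fun t : ℝ => (t:ℂ) ^ s)
      (f := fun y : ℝ => x^2 - y^2) h1 h2c).continuousWithinAt
  refine Integrable.mono' (g := fun _ => ((x^2) ^ s.re ⊔ 1) * x^n)
    (integrableOn_const measure_Ioo_lt_top.ne)
    (hcont.aestronglyMeasurable measurableSet_Ioo) ?_
  rw [ae_restrict_iff' measurableSet_Ioo]
  refine Filter.Eventually.of_forall fun y hy => ?_
  have hpos : (0:ℝ) < x^2 - y^2 := by nlinarith [hy.1, hy.2]
  rw [norm_mul, ofReal_base]
  have h1 : ‖((x^2 - y^2 : ℝ) : ℂ) ^ s‖ = (x^2 - y^2) ^ s.re := by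
    rw [Complex.norm_cpow_eq_rpow_re_of_pos hpos]
  have h2 : (x^2 - y^2) ^ s.re ≤ (x^2) ^ s.re := by
    apply Real.rpow_le_rpow hpos.le (by nlinarith [hy.1]) hs
  have h3 : ‖((y:ℝ):ℂ)^n‖ = |y|^n := by
    rw [norm_pow, Complex.norm_real, Real.norm_eq_abs]
  have h4 : |y|^n ≤ x^n := by
    apply pow_le_pow_left₀ (abs_nonneg y) (by rw [abs_of_pos hy.1]; exact hy.2.le)
  calc ‖((x^2 - y^2 : ℝ) : ℂ) ^ s‖ * ‖((y:ℝ):ℂ)^n‖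
      ≤ (x^2) ^ s.re * x^n := by
        rw [h1, h3]
        exact mul_le_mul h2 h4 (pow_nonneg (abs_nonneg y) n) (Real.rpow_nonneg (by positivity) _)
    _ ≤ ((x^2) ^ s.re ⊔ 1) * x^n := by
        apply mul_le_mul_of_nonneg_right le_sup_left (by positivity)

lemma hasDerivAt_cpow_base {x : ℝ} (s : ℂ) {y : ℝ} (hy : y ∈ Set.Ioo 0 x) :
    HasDerivAt (fun y : ℝ => ((x:ℂ)^2 - (y:ℂ)^2)^(s+1))
      ((s+1) * ((x:ℂ)^2 - (y:ℂ)^2)^s * (-(2*(y:ℂ)))) y := by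
  have hof : HasDerivAt (fun t : ℝ => (t:ℂ)) 1 y := by
    exact Complex.ofRealCLM.hasDerivAt (x := y)
  have hsq : HasDerivAt (fun t : ℝ => ((t:ℂ))^2) (2*(y:ℂ)) y := by
    have := (hasDerivAt_pow 2 ((y:ℝ):ℂ)).comp y hof
    simp at this
    exact this
  have hbase : HasDerivAt (fun t : ℝ => (x:ℂ)^2 - (t:ℂ)^2) (-(2*(y:ℂ))) y := by
    simpa using hsq.const_sub ((x:ℂ)^2)
  have hpos : (0:ℝ) < x^2 - y^2 := by nlinarith [hy.1, hy.2]
  have hslit : ((x:ℂ)^2 - (y:ℂ)^2) ∈ Complex.slitPlane := by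
    rw [ofReal_base, Complex.mem_slitPlane_iff]
    left
    simpa only [Complex.ofReal_re] using hpos
  have hg : HasDerivAt (fun z : ℂ => z^(s+1)) ((s+1) * ((x:ℂ)^2 - (y:ℂ)^2)^(s+1-1))
      ((x:ℂ)^2 - (y:ℂ)^2) := (Complex.hasStrictDerivAt_cpow_const hslit).hasDerivAt
  have h := (hg.hasFDerivAt.restrictScalars ℝ).comp_hasDerivAt y hbase
  refine h.congr_deriv ?_
  rw [add_sub_cancel_right]
  simp only [ContinuousLinearMap.coe_restrictScalars', ContinuousLinearMap.smulRight_apply,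
    ContinuousLinearMap.one_apply, smul_eq_mul, ContinuousLinearMap.toSpanSingleton_apply]
  ring

lemma hasDerivAt_ofRealPow (m : ℕ) (y : ℝ) :
    HasDerivAt (fun t : ℝ => ((t:ℂ))^m) ((m:ℂ)*(y:ℂ)^(m-1)) y := by
  have hof : HasDerivAt (fun t : ℝ => (t:ℂ)) 1 y := by
    exact Complex.ofRealCLM.hasDerivAt (x := y)
  have := (hasDerivAt_pow m ((y:ℝ):ℂ)).comp y hof
  simp at this
  exact this


lemma continuous_cpow_base {x : ℝ} {w : ℂ} (hw : 0 < w.re) :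
    Continuous (fun y : ℝ => ((x:ℂ)^2 - (y:ℂ)^2)^w) := by
  simp only [ofReal_base]
  exact Continuous.comp (g := fun t : ℝ => (t:ℂ)^w) (f := fun y : ℝ => x^2 - y^2)
    (Complex.continuous_ofReal_cpow_const hw) (by fun_prop)

lemma intervalIntegrable_cpow_mul_pow {x : ℝ} (hx : 0 < x) {s : ℂ} (hs : 0 ≤ s.re) (n : ℕ) :
    IntervalIntegrable (fun y : ℝ => ((x:ℂ)^2 - (y:ℂ)^2) ^ s * (y:ℂ)^n) volume 0 x := by
  rw [intervalIntegrable_iff, Set.uIoc_of_le hx.le]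
  exact (integrableOn_Ioc_iff_integrableOn_Ioo).2 (integrableOn_cpow_mul_pow hx hs n)

lemma integral_core {x : ℝ} (hx : 0 < x) : ∀ (k : ℕ) (s : ℂ), 0 ≤ s.re →
    (∫ y in (0:ℝ)..x, ((x:ℂ)^2 - (y:ℂ)^2) ^ s * (y:ℂ)^(2*k+1))
      = ((x:ℂ)^2) ^ (s + k + 1) * (Nat.factorial k : ℂ) / (2 * pochC (s+1) (k+1)) := by
  intro k
  induction k with
  | zero =>
    intro s hs
    have hs1 : s + 1 ≠ 0 := by
      refine ne_of_apply_ne Complex.re ?_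
      simp only [Complex.add_re, Complex.one_re, Complex.zero_re]
      linarith
    have hs2 : (-(2*(s+1))) ≠ 0 := by
      simp only [neg_ne_zero, mul_ne_zero_iff]
      exact ⟨two_ne_zero, hs1⟩
    have hre1 : (0:ℝ) < (s+1).re := by
      simp only [Complex.add_re, Complex.one_re]; linarith
    have hcont : ContinuousOn
        (fun y : ℝ => (-(2*(s+1)))⁻¹ * ((x:ℂ)^2 - (y:ℂ)^2)^(s+1)) (Set.Icc 0 x) :=
      (continuous_const.mul (continuous_cpow_base hre1)).continuousOn
    have hderiv : ∀ y ∈ Set.Ioo (0:ℝ) x,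
        HasDerivAt (fun y : ℝ => (-(2*(s+1)))⁻¹ * ((x:ℂ)^2 - (y:ℂ)^2)^(s+1))
          (((x:ℂ)^2 - (y:ℂ)^2) ^ s * (y:ℂ)^(2*0+1)) y := by
      intro y hy
      have h := (hasDerivAt_cpow_base s hy).const_mul ((-(2*(s+1)))⁻¹)
      refine h.congr_deriv ?_
      field_simp
      ring
    have key := intervalIntegral.integral_eq_sub_of_hasDeriv_right_of_le hx.le hcont
      (fun y hy => (hderiv y hy).hasDerivWithinAt)
      (intervalIntegrable_cpow_mul_pow hx hs _)
    rw [key]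
    rw [sub_self, Complex.zero_cpow hs1, mul_zero]
    have h0 : ((0:ℝ):ℂ)^2 = 0 := by norm_num
    rw [h0, sub_zero]
    have hp : pochC (s+1) (0+1) = s + 1 := by simp [pochC]
    rw [hp]
    simp only [Nat.factorial_zero, Nat.cast_zero, Nat.cast_one]
    field_simp
    simp
  | succ k ih =>
    intro s hs
    have hs1 : s + 1 ≠ 0 := by
      refine ne_of_apply_ne Complex.re ?_
      simp only [Complex.add_re, Complex.one_re, Complex.zero_re]
      linarith
    have hs2 : (-(2*(s+1))) ≠ 0 := by
      simp only [neg_ne_zero, mul_ne_zero_iff]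
      exact ⟨two_ne_zero, hs1⟩
    have hre1 : (0:ℝ) < (s+1).re := by
      simp only [Complex.add_re, Complex.one_re]; linarith
    have hre1' : (0:ℝ) ≤ (s+1).re := hre1.le
    have hc1 : Continuous (fun y : ℝ => ((y:ℝ):ℂ)^(2*k+2)) := by fun_prop
    have hcont : ContinuousOn
        (fun y : ℝ => (-(2*(s+1)))⁻¹ * (((x:ℂ)^2 - (y:ℂ)^2)^(s+1) * (y:ℂ)^(2*k+2)))
        (Set.Icc 0 x) :=
      (continuous_const.mul ((continuous_cpow_base hre1).mul hc1)).continuousOn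
    have hderiv : ∀ y ∈ Set.Ioo (0:ℝ) x,
        HasDerivAt (fun y : ℝ => (-(2*(s+1)))⁻¹ * (((x:ℂ)^2 - (y:ℂ)^2)^(s+1) * (y:ℂ)^(2*k+2)))
          (((x:ℂ)^2 - (y:ℂ)^2) ^ s * (y:ℂ)^(2*(k+1)+1)
            - ((k:ℂ)+1)/(s+1) * (((x:ℂ)^2 - (y:ℂ)^2) ^ (s+1) * (y:ℂ)^(2*k+1))) y := by
      intro y hy
      have h := ((hasDerivAt_cpow_base s hy).mul (hasDerivAt_ofRealPow (2*k+2) y)).const_mul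
        ((-(2*(s+1)))⁻¹)
      refine h.congr_deriv ?_
      have h1 : (2*k+2) - 1 = 2*k+1 := by omega
      rw [h1]
      have h2 : ((2*k+2 : ℕ):ℂ) = 2*(k:ℂ)+2 := by push_cast; ring
      rw [h2]
      field_simp
      ring
    have key := intervalIntegral.integral_eq_sub_of_hasDeriv_right_of_le hx.le hcont
      (fun y hy => (hderiv y hy).hasDerivWithinAt)
      (((intervalIntegrable_cpow_mul_pow hx hs _).sub
        (((intervalIntegrable_cpow_mul_pow hx hre1' (2*k+1))).const_mul _)))
    rw [sub_self, Complex.zero_cpow hs1, zero_mul, mul_zero] at key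
    have h0 : ((0:ℝ):ℂ)^(2*k+2) = 0 := by norm_num
    rw [h0, mul_zero, mul_zero, sub_zero] at key
    rw [intervalIntegral.integral_sub (intervalIntegrable_cpow_mul_pow hx hs _)
      (((intervalIntegrable_cpow_mul_pow hx hre1' (2*k+1))).const_mul _),
      sub_eq_zero] at key
    rw [key, intervalIntegral.integral_const_mul, ih (s+1) (by linarith [hre1])]
    have hexp : s + 1 + (k:ℂ) + 1 = s + ((k:ℕ)+1:ℕ) + 1 := by push_cast; ring
    rw [hexp]
    have hpoch : pochC (s+1) (k+1+1) = (s+1) * pochC (s+2) (k+1) := by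
      rw [pochC_succ']
      congr 1
      ring_nf
    have hfact : (Nat.factorial (k+1) : ℂ) = ((k:ℂ)+1) * (Nat.factorial k : ℂ) := by
      rw [Nat.factorial_succ]; push_cast; ring
    rw [hpoch, hfact]
    have hpoch2 : pochC (s+2) (k+1) ≠ 0 := by
      apply pochC_ne_zero
      have : (s+2).re = s.re + 2 := by simp
      rw [this]; linarith
    rw [show s+1+1 = s+2 from by ring]
    rw [div_mul_div_comm]
    rw [div_eq_div_iff (mul_ne_zero hs1 (mul_ne_zero two_ne_zero hpoch2))
      (mul_ne_zero two_ne_zero (mul_ne_zero hs1 hpoch2))]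
    ring


noncomputable def cc (N k : ℕ) : ℝ :=
  1 / (2^(2*k+N+1) * ((Nat.factorial k : ℝ) * (Nat.factorial (k+N+1) : ℝ)))

lemma cc_pos (N k : ℕ) : 0 < cc N k := by
  rw [cc]
  positivity

lemma cc_le (N k : ℕ) : cc N k ≤ 1 / (Nat.factorial k : ℝ) := by
  rw [cc, div_le_div_iff₀ (by positivity) (by positivity), one_mul, one_mul]
  have h1 : (1:ℝ) ≤ 2^(2*k+N+1) := one_le_pow₀ (by norm_num)
  have h2 : (1:ℝ) ≤ (Nat.factorial (k+N+1) : ℝ) := by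
    exact_mod_cast Nat.one_le_iff_ne_zero.2 (Nat.factorial_ne_zero _)
  have h3 : (0:ℝ) < (Nat.factorial k : ℝ) := by exact_mod_cast Nat.factorial_pos k
  calc (Nat.factorial k : ℝ) = 1 * ((Nat.factorial k : ℝ) * 1) := by ring
    _ ≤ 2^(2*k+N+1) * ((Nat.factorial k : ℝ) * (Nat.factorial (k+N+1) : ℝ)) :=
        mul_le_mul h1 (mul_le_mul_of_nonneg_left h2 h3.le) (by positivity) (by positivity)

lemma cc_cast (N k : ℕ) : ((cc N k : ℝ) : ℂ) =
    1 / (2^(2*k+N+1) * ((Nat.factorial k : ℂ) * (Nat.factorial (k+N+1) : ℂ))) := by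
  rw [cc]; push_cast; ring

set_option maxHeartbeats 1000000 in
theorem integral_besselI_oneF2 (x τ : ℝ) (hx : 0 < x) (N : ℕ) :
    (∫ y in (0:ℝ)..x,
        ((x : ℂ) ^ 2 - (y : ℂ) ^ 2) ^ ((N : ℂ) - Complex.I * τ) *
          (besselI (N + 1) y : ℂ) / (y : ℂ) ^ N) =
      (2 : ℂ) ^ (-(N : ℂ) - 2) * (x : ℂ) ^ (2 * (N : ℂ) - 2 * Complex.I * τ + 2) /
          (((N : ℂ) - Complex.I * τ + 1) * (Nat.factorial (N + 1) : ℂ)) *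
        oneF2 1 ((N : ℂ) - Complex.I * τ + 2) ((N : ℂ) + 2) ((x : ℂ) ^ 2 / 4) := by
  set s : ℂ := (N : ℂ) - Complex.I * τ with hsdef
  have hsre : s.re = N := by
    simp [hsdef, Complex.sub_re, Complex.mul_re]
  have hs : 0 ≤ s.re := by rw [hsre]; positivity
  have hs1 : s + 1 ≠ 0 := by
    refine ne_of_apply_ne Complex.re ?_
    simp only [Complex.add_re, Complex.one_re, Complex.zero_re, hsre]
    positivity
  -- step 1 : reduce to Ioo
  rw [intervalIntegral.integral_of_le hx.le, MeasureTheory.integral_Ioc_eq_integral_Ioo]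
  -- step 2 : expand bessel into a tsum
  rw [MeasureTheory.setIntegral_congr_fun (g := fun y : ℝ =>
      ∑' k : ℕ, ((x:ℂ)^2 - (y:ℂ)^2)^s * (y:ℂ)^(2*k+1) * ((cc N k : ℝ) : ℂ))
      measurableSet_Ioo ?eqon]
  case eqon =>
    intro y hy
    have hy0 : (y:ℂ) ≠ 0 := Complex.ofReal_ne_zero.2 (ne_of_gt hy.1)
    simp only [besselI, Complex.ofReal_tsum, ← add_assoc]
    rw [div_eq_mul_inv, mul_assoc, ← tsum_mul_right, ← tsum_mul_left]
    refine tsum_congr fun k => ?_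
    rw [mul_assoc]
    congr 1
    rw [cc_cast]
    push_cast
    have hsplit : (2*k+N+1) = (2*k+1) + N := by omega
    rw [← div_eq_mul_inv, div_eq_iff (pow_ne_zero _ hy0)]
    rw [hsplit, pow_add, div_pow]
    field_simp
    rw [div_pow, pow_add (2:ℂ) (2*k+1) N]
    field_simp
  -- step 3 : swap integral and sum
  have hInt : ∀ k : ℕ, Integrable
      (fun y : ℝ => ((x:ℂ)^2 - (y:ℂ)^2)^s * (y:ℂ)^(2*k+1) * ((cc N k : ℝ) : ℂ))
      (volume.restrict (Set.Ioo 0 x)) :=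
    fun k => (integrableOn_cpow_mul_pow hx hs (2*k+1)).mul_const _
  have hBound : ∀ k : ℕ, ∀ y ∈ Set.Ioo (0:ℝ) x,
      ‖((x:ℂ)^2 - (y:ℂ)^2)^s * (y:ℂ)^(2*k+1) * ((cc N k : ℝ) : ℂ)‖
        ≤ (((x^2) ^ s.re ⊔ 1) * x^(2*k+1)) * cc N k := by
    intro k y hy
    have hpos : (0:ℝ) < x^2 - y^2 := by nlinarith [hy.1, hy.2]
    rw [norm_mul, norm_mul, ofReal_base]
    have h1 : ‖((x^2 - y^2 : ℝ) : ℂ) ^ s‖ = (x^2 - y^2) ^ s.re := by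
      rw [Complex.norm_cpow_eq_rpow_re_of_pos hpos]
    have h2 : (x^2 - y^2) ^ s.re ≤ (x^2) ^ s.re :=
      Real.rpow_le_rpow hpos.le (by nlinarith [hy.1]) hs
    have h3 : ‖((y:ℝ):ℂ)^(2*k+1)‖ = |y|^(2*k+1) := by
      rw [norm_pow, Complex.norm_real, Real.norm_eq_abs]
    have h4 : |y|^(2*k+1) ≤ x^(2*k+1) :=
      pow_le_pow_left₀ (abs_nonneg y) (by rw [abs_of_pos hy.1]; exact hy.2.le) _
    have h5 : ‖((cc N k : ℝ) : ℂ)‖ = cc N k := by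
      rw [Complex.norm_real, Real.norm_eq_abs, abs_of_pos (cc_pos N k)]
    rw [h1, h3, h5]
    have hnn : (0:ℝ) ≤ (x^2) ^ s.re ⊔ 1 := le_trans zero_le_one le_sup_right
    refine mul_le_mul_of_nonneg_right ?_ (cc_pos N k).le
    calc (x^2-y^2) ^ s.re * |y|^(2*k+1) ≤ (x^2) ^ s.re * x^(2*k+1) :=
          mul_le_mul h2 h4 (pow_nonneg (abs_nonneg y) _) (Real.rpow_nonneg (by positivity) _)
      _ ≤ ((x^2) ^ s.re ⊔ 1) * x^(2*k+1) :=
          mul_le_mul_of_nonneg_right le_sup_left (by positivity)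
  have hSum : Summable (fun k : ℕ => ∫ y in Set.Ioo (0:ℝ) x,
      ‖((x:ℂ)^2 - (y:ℂ)^2)^s * (y:ℂ)^(2*k+1) * ((cc N k : ℝ) : ℂ)‖) := by
    set M : ℝ := (x^2) ^ s.re ⊔ 1 with hM
    have hM0 : 0 ≤ M := le_trans zero_le_one le_sup_right
    refine Summable.of_nonneg_of_le (fun k => integral_nonneg fun y => norm_nonneg _)
      (fun k => ?_) (f := fun k => (M * x^2) * ((x^2)^k / (Nat.factorial k : ℝ)))
      ?_
    · have step1 : (∫ y in Set.Ioo (0:ℝ) x,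
          ‖((x:ℂ)^2 - (y:ℂ)^2)^s * (y:ℂ)^(2*k+1) * ((cc N k : ℝ) : ℂ)‖)
          ≤ ∫ _ in Set.Ioo (0:ℝ) x, (M * x^(2*k+1)) * cc N k := by
        refine MeasureTheory.setIntegral_mono_on ((hInt k).norm) ?_ measurableSet_Ioo ?_
        · exact integrableOn_const measure_Ioo_lt_top.ne
        · exact hBound k
      refine le_trans step1 ?_
      rw [MeasureTheory.setIntegral_const, Real.volume_real_Ioo_of_le hx.le, sub_zero,
        smul_eq_mul]
      have hck : cc N k ≤ 1 / (Nat.factorial k : ℝ) := cc_le N k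
      have hxp : x^(2*k+1) = x * (x^2)^k := by ring
      calc x * ((M * x^(2*k+1)) * cc N k)
          ≤ x * ((M * x^(2*k+1)) * (1 / (Nat.factorial k : ℝ))) := by
            refine mul_le_mul_of_nonneg_left (mul_le_mul_of_nonneg_left hck ?_) hx.le
            positivity
        _ = (M * x^2) * ((x^2)^k / (Nat.factorial k : ℝ)) := by
            rw [hxp]; field_simp
    · exact (Real.summable_pow_div_factorial (x^2)).mul_left _
  rw [← MeasureTheory.integral_tsum_of_summable_integral_norm hInt hSum]
  -- step 4/5 : evaluate each integral and match with RHS series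
  rw [oneF2]
  conv_rhs => rw [← tsum_mul_left]
  refine tsum_congr fun k => ?_
  rw [MeasureTheory.integral_mul_const, ← MeasureTheory.integral_Ioc_eq_integral_Ioo,
    ← intervalIntegral.integral_of_le hx.le, integral_core hx k s hs]
  -- now pure algebra
  have hXne : ((x:ℂ)^2) ≠ 0 := pow_ne_zero _ (Complex.ofReal_ne_zero.2 hx.ne')
  have hX1 : ((x:ℂ)^2) ^ (s + (k:ℂ) + 1) = ((x:ℂ)^2) ^ (s+1) * ((x:ℂ)^2) ^ (k:ℕ) := by
    rw [show s + (k:ℂ) + 1 = (s+1) + (k:ℕ) by push_cast; ring,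
      Complex.cpow_add _ _ hXne, Complex.cpow_natCast]
  have hX2 : (x:ℂ) ^ (2 * (N:ℂ) - 2 * Complex.I * τ + 2) = ((x:ℂ)^2) ^ (s+1) := by
    rw [show (2 * (N:ℂ) - 2 * Complex.I * ↑τ + 2) = 2*(s+1) by rw [hsdef]; ring,
      ← cpow_sq hx (s+1)]
  have h2 : (2:ℂ)^(-(N:ℂ)-2) = ((2:ℂ)^(N+2 : ℕ))⁻¹ := by
    have e1 : ((-(((N+2 : ℕ) : ℤ)) : ℤ) : ℂ) = -(N:ℂ)-2 := by push_cast; ring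
    rw [← e1, Complex.cpow_intCast, zpow_neg, zpow_natCast]
  have hpoch : pochC (s+1) (k+1) = (s+1) * pochC (s+2) k := by
    rw [pochC_succ']
    congr 1
    ring
  have hfactQ : (Nat.factorial (k+N+1) : ℂ) = (Nat.factorial (N+1) : ℂ) * pochC ((N:ℂ)+2) k :=
    (fact_mul_pochC N k).symm
  have hP2 : pochC (s+2) k ≠ 0 := by
    apply pochC_ne_zero
    have : (s+2).re = s.re + 2 := by simp
    rw [this, hsre]; positivity
  have hQ : pochC ((N:ℂ)+2) k ≠ 0 := by
    apply pochC_ne_zero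
    have : ((N:ℂ)+2).re = (N:ℝ) + 2 := by simp
    rw [this]; positivity
  have hkf : (Nat.factorial k : ℂ) ≠ 0 := Nat.cast_ne_zero.2 (Nat.factorial_ne_zero _)
  have hNf : (Nat.factorial (N+1) : ℂ) ≠ 0 := Nat.cast_ne_zero.2 (Nat.factorial_ne_zero _)
  have h4k : (4:ℂ)^k = 2^(2*k) := by
    rw [show (4:ℂ) = 2^2 by norm_num, ← pow_mul]
  rw [hX1, hX2, h2, hpoch, cc_cast, hfactQ, pochC_one, div_pow, h4k]
  have h2ne : (2:ℂ) ≠ 0 := two_ne_zero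
  field_simp
  ring
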